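/- arXiv:1408.6355 — 2 statements merged into one kernel-verified Lean document; each statement's English description precedes it below -/
import Mathlib

section
/- The union of all local attractors of a local iterated function system F_loc = {X; (X_i, f_i) : i ∈ {1,…,m}} is itself a local attractor; hence there exists a largest local attractor (with respect to set inclusion). -/
/-- The union of all local attractors of a local IFS is itself a local
attractor; hence there exists a largest local attractor with respect to set inclusion. -/
theorem largest_local_attractor {α : Type*} (m : ℕ) (X : Fin m → Set α)
    (f : Fin m → α → α) :
    ∃ A : Set α,
      A = ⋃₀ {B : Set α | B = ⋃ i, f i '' (B ∩ X i)} ∧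
      A = ⋃ i, f i '' (A ∩ X i) ∧
      ∀ B : Set α, B = ⋃ i, f i '' (B ∩ X i) → B ⊆ A := by
  refine ⟨⋃₀ {B : Set α | B = ⋃ i, f i '' (B ∩ X i)}, rfl, ?_,
    fun B hB => Set.subset_sUnion_of_mem hB⟩
  ext x
  simp only [Set.mem_sUnion, Set.mem_iUnion, Set.mem_image, Set.mem_inter_iff,
    Set.mem_setOf_eq]
  constructor
  · rintro ⟨B, hB, hxB⟩
    rw [hB] at hxB
    simp only [Set.mem_iUnion, Set.mem_image, Set.mem_inter_iff] at hxB
    obtain ⟨i, y, ⟨hyB, hyX⟩, hfy⟩ := hxB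
    exact ⟨i, y, ⟨⟨B, hB, hyB⟩, hyX⟩, hfy⟩
  · rintro ⟨i, y, ⟨⟨B, hB, hyB⟩, hyX⟩, hfy⟩
    refine ⟨B, hB, ?_⟩
    rw [hB]
    exact Set.mem_iUnion.mpr ⟨i, ⟨y, ⟨hyB, hyX⟩, hfy⟩⟩
end

section
/- Let 𝔣 ∈ B(X, ℝ) be the fixed point of the RB operator Φ with data (u_i, λ_i, S_i). Define w_i : X_i × ℝ → X × ℝ by w_i(x,y) := (u_i(x), λ_i(x) + S_i(x)·y), and let W_loc(G) := ⋃_{i=1}^m w_i(G ∩ (X_i × ℝ)). Then for every f ∈ B(X,ℝ), graph(Φf) = W_loc(graph f); in particular graph 𝔣 = W_loc(graph 𝔣), i.e., the graph of the local fractal function is a local attractor of the local IFS {X×ℝ; (X_i×ℝ, w_i)}. -/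
open Set

/-- Let `𝔣 ∈ B(X, ℝ)` be the fixed point of the RB operator `Φ` with
data `(uᵢ, λᵢ, Sᵢ)`. With `wᵢ(x,y) := (uᵢ(x), λᵢ(x) + Sᵢ(x)·y)` and
`W_loc(G) := ⋃ i, wᵢ(G ∩ (Xᵢ × ℝ))`, one has `graph (Φ f) = W_loc(graph f)` for every
`f ∈ B(X,ℝ)`; in particular `graph 𝔣 = W_loc(graph 𝔣)`, i.e. the graph of the local
fractal function is a local attractor of the local IFS `{X×ℝ; (Xᵢ×ℝ, wᵢ)}`. -/
theorem graph_local_attractor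
    {α : Type*}
    (m : ℕ) (hm : 0 < m)
    (X : Fin m → Set α) (hXne : ∀ i, (X i).Nonempty)
    (u : Fin m → α → α)
    (hinj : ∀ i, Set.InjOn (u i) (X i))
    (hcover : (⋃ i, u i '' X i) = Set.univ)
    (hdisj : Pairwise fun i j => Disjoint (u i '' X i) (u j '' X j))
    (lam S : Fin m → α → ℝ)
    (w : Fin m → α × ℝ → α × ℝ)
    (hw : ∀ i p, w i p = (u i p.1, lam i p.1 + S i p.1 * p.2))
    (Φ : (α → ℝ) → (α → ℝ))
    (hΦ : ∀ (f : α → ℝ) (i : Fin m), ∀ x ∈ X i,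
      Φ f (u i x) = lam i x + S i x * f x)
    (frak : α → ℝ) (hfix : Φ frak = frak) :
    (∀ f : α → ℝ,
      {p : α × ℝ | p.2 = Φ f p.1} =
        ⋃ i, w i '' ({p : α × ℝ | p.2 = f p.1} ∩ (X i ×ˢ (Set.univ : Set ℝ)))) ∧
    {p : α × ℝ | p.2 = frak p.1} =
      ⋃ i, w i '' ({p : α × ℝ | p.2 = frak p.1} ∩ (X i ×ˢ (Set.univ : Set ℝ))) := by
  have main : ∀ f : α → ℝ,
      {p : α × ℝ | p.2 = Φ f p.1} =
        ⋃ i, w i '' ({p : α × ℝ | p.2 = f p.1} ∩ (X i ×ˢ (Set.univ : Set ℝ))) := by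
    intro f
    ext ⟨a, y⟩
    simp only [mem_setOf_eq, mem_iUnion, mem_image, mem_inter_iff, mem_prod, mem_univ,
      and_true]
    constructor
    · intro hy
      have ha : a ∈ ⋃ i, u i '' X i := by rw [hcover]; trivial
      obtain ⟨i, x, hx, hax⟩ := by simpa using ha
      refine ⟨i, (x, f x), ⟨rfl, hx⟩, ?_⟩
      rw [hw]
      simp only
      rw [hax, ← hΦ f i x hx, hax, ← hy]
    · rintro ⟨i, ⟨x, z⟩, ⟨hz, hx⟩, heq⟩
      rw [hw] at heq
      simp only [Prod.mk.injEq] at heq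
      obtain ⟨h1, h2⟩ := heq
      simp only at hz
      subst hz h1
      rw [← h2, hΦ f i x hx]
  refine ⟨main, ?_⟩
  conv_lhs => rw [← hfix]
  exact main frak
end
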